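/- Assume D is a block: D is nonzero, every object is a finite direct sum of indecomposables, and the indecomposable objects are path-connected. If there exists one indecomposable object X of D such that there is no path from X[1] to X, then for every indecomposable object Y of D there is no path from Y[1] to Y. -/

import Mathlib

open CategoryTheory CategoryTheory.Limits CategoryTheory.Pretriangulated

universe v u

variable (C : Type u) [Category.{v} C] [Preadditive C] [HasZeroObject C]
  [HasShift C ℤ] [∀ n : ℤ, (shiftFunctor C n).Additive] [Pretriangulated C]
  [HasFiniteBiproducts C]

/-- An object is indecomposable if it is nonzero and any biproduct decomposition is trivial. -/
def Indec (X : C) : Prop :=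
  ¬ IsZero X ∧ ∀ (A B : C), (X ≅ A ⊞ B) → IsZero A ∨ IsZero B

/-- There is a path from `X` to `Y`: a sequence of indecomposables where each consecutive
pair admits a nonzero morphism, or the next one is the shift of the previous one. -/
def HasPath (X Y : C) : Prop :=
  ∃ (n : ℕ) (f : Fin (n + 1) → C), f 0 = X ∧ f (Fin.last n) = Y ∧
    (∀ i, Indec C (f i)) ∧
    ∀ i : Fin n, (∃ g : f i.castSucc ⟶ f i.succ, g ≠ 0) ∨
      Nonempty (f i.succ ≅ (f i.castSucc)⟦(1 : ℤ)⟧)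

/-- Two indecomposables are connected by a sequence of paths and inverse paths. -/
def PathConn (X Y : C) : Prop :=
  ∃ (n : ℕ) (f : Fin (n + 1) → C), f 0 = X ∧ f (Fin.last n) = Y ∧
    (∀ i, Indec C (f i)) ∧
    ∀ i : Fin n, (∃ g : f i.castSucc ⟶ f i.succ, g ≠ 0) ∨
      (∃ g : f i.succ ⟶ f i.castSucc, g ≠ 0) ∨
      ∃ s : ℤ, Nonempty (f i.succ ≅ (f i.castSucc)⟦s⟧)

/-- Every object is a finite direct sum of indecomposable objects. -/
def EveryObjectDecomposes : Prop :=
  ∀ X : C, ∃ (n : ℕ) (f : Fin n → C), (∀ i, Indec C (f i)) ∧ Nonempty (X ≅ ⨁ f)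

/-- `D` is a block: nonzero, Krull-Schmidt-type decomposition, and path-connected. -/
def IsBlock : Prop :=
  (∃ X : C, ¬ IsZero X) ∧ EveryObjectDecomposes C ∧
    ∀ X Y : C, Indec C X → Indec C Y → PathConn C X Y

/-- `add S`: objects isomorphic to finite direct sums of objects of `S`. -/
def addClosure (S : Set C) : Set C :=
  {X | ∃ (n : ℕ) (f : Fin n → C), (∀ i, f i ∈ S) ∧ Nonempty (X ≅ ⨁ f)}

/-- A `t`-structure `(D^{≤0}, D^{≥0})` on `C`. -/
structure TStruct where
  le : Set C
  ge : Set C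
  le_iso : ∀ ⦃X Y : C⦄, (X ≅ Y) → X ∈ le → Y ∈ le
  ge_iso : ∀ ⦃X Y : C⦄, (X ≅ Y) → X ∈ ge → Y ∈ ge
  hom_zero : ∀ ⦃X Y : C⦄, X ∈ le → Y ∈ ge → ∀ f : X ⟶ Y⟦(-1 : ℤ)⟧, f = 0
  le_shift : ∀ ⦃X : C⦄, X ∈ le → X⟦(1 : ℤ)⟧ ∈ le
  ge_shift : ∀ ⦃X : C⦄, X ∈ ge → X⟦(-1 : ℤ)⟧ ∈ ge
  exists_triangle : ∀ X : C, ∃ (A B : C) (f : A ⟶ X) (g : X ⟶ B⟦(-1 : ℤ)⟧)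
      (h : B⟦(-1 : ℤ)⟧ ⟶ A⟦(1 : ℤ)⟧),
      (Triangle.mk f g h ∈ distTriang C) ∧ A ∈ le ∧ B ∈ ge

variable {C}

/-- The heart of a t-structure. -/
def TStruct.heart (t : TStruct C) : Set C := t.le ∩ t.ge

/-- A t-structure is bounded if every object lies in `D^{≤n} ∩ D^{≥m}` for some `m ≤ n`,
where `X ∈ D^{≤n} := D^{≤0}[-n]` iff `X⟦n⟧ ∈ D^{≤0}`, and similarly for `D^{≥m}`. -/
def TStruct.Bounded (t : TStruct C) : Prop :=
  ∀ X : C, ∃ m n : ℤ, m ≤ n ∧ X⟦n⟧ ∈ t.le ∧ X⟦m⟧ ∈ t.ge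

/-- A bounded t-structure is hereditary if `Hom(X, Y⟦n⟧) = 0` for all `X`, `Y` in the heart
and `n ≥ 2`. -/
def TStruct.Hereditary (t : TStruct C) : Prop :=
  t.Bounded ∧ ∀ ⦃X Y : C⦄, X ∈ t.heart → Y ∈ t.heart →
    ∀ n : ℤ, 2 ≤ n → ∀ f : X ⟶ Y⟦n⟧, f = 0

variable (C)


section Stmt17Aux
set_option linter.unusedSectionVars false
variable {C}

/-- One step of a path. -/
def Step (X Y : C) : Prop := (∃ g : X ⟶ Y, g ≠ 0) ∨ Nonempty (Y ≅ X⟦(1 : ℤ)⟧)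

/-- Inductive version of `HasPath`. -/
inductive P : C → C → Prop
  | refl (X : C) (h : Indec C X) : P X X
  | snoc {X Y Z : C} : P X Y → Step Y Z → Indec C Z → P X Z

theorem P.trans {X Y Z : C} (h1 : P X Y) (h2 : P Y Z) : P X Z := by
  induction h2 with
  | refl _ => exact h1
  | snoc _ st hi ih => exact ih.snoc st hi

theorem step_of_iso {X Y : C} (e : X ≅ Y) (hX : Indec C X) : Step X Y :=
  Or.inl ⟨e.hom, fun h => hX.1 (by
    rw [IsZero.iff_id_eq_zero, ← e.hom_inv_id, h, zero_comp])⟩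

theorem isZero_shift_of {X : C} (s : ℤ) (h : IsZero X) : IsZero (X⟦s⟧) := by
  rw [IsZero.iff_id_eq_zero] at h ⊢
  calc 𝟙 (X⟦s⟧) = (shiftFunctor C s).map (𝟙 X) := ((shiftFunctor C s).map_id X).symm
  _ = 0 := by rw [h, Functor.map_zero]

theorem isZero_of_shift {X : C} (s : ℤ) (h : IsZero (X⟦s⟧)) : IsZero X :=
  (isZero_shift_of (-s) h).of_iso
    (((shiftFunctorCompIsoId C s (-s) (by ring)).app X).symm)

theorem shift_map_ne_zero {X Y : C} {g : X ⟶ Y} (hg : g ≠ 0) (s : ℤ) :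
    (shiftFunctor C s).map g ≠ 0 := fun h =>
  hg ((shiftFunctor C s).map_injective (by rw [h, Functor.map_zero]))

theorem indec_shift {X : C} (h : Indec C X) (s : ℤ) : Indec C (X⟦s⟧) := by
  refine ⟨fun hz => h.1 (isZero_of_shift s hz), fun A B e => ?_⟩
  haveI := preservesBinaryBiproduct_of_preservesBiproduct (shiftFunctor C (-s)) A B
  have e2 : X ≅ A⟦-s⟧ ⊞ B⟦-s⟧ :=
    ((shiftFunctorCompIsoId C s (-s) (by ring)).app X).symm ≪≫
      (shiftFunctor C (-s)).mapIso e ≪≫ (shiftFunctor C (-s)).mapBiprod A B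
  rcases h.2 _ _ e2 with hz | hz
  · exact Or.inl (isZero_of_shift (-s) hz)
  · exact Or.inr (isZero_of_shift (-s) hz)

theorem Step.shift {X Y : C} (st : Step X Y) (s : ℤ) : Step (X⟦s⟧) (Y⟦s⟧) := by
  rcases st with ⟨g, hg⟩ | ⟨⟨e⟩⟩
  · exact Or.inl ⟨(shiftFunctor C s).map g, shift_map_ne_zero hg s⟩
  · exact Or.inr ⟨(shiftFunctor C s).mapIso e ≪≫ shiftComm X 1 s⟩

theorem P.shift {X Y : C} (h : P X Y) (s : ℤ) : P (X⟦s⟧) (Y⟦s⟧) := by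
  induction h with
  | refl hZ => exact P.refl _ (indec_shift hZ s)
  | snoc _ st hi ih => exact ih.snoc (st.shift s) (indec_shift hi s)

theorem P.single {X Y : C} (hX : Indec C X) (hY : Indec C Y) (st : Step X Y) : P X Y :=
  (P.refl X hX).snoc st hY

theorem P.of_seq (n : ℕ) : ∀ (f : Fin (n + 1) → C), (∀ i, Indec C (f i)) →
    (∀ i : Fin n, Step (f i.castSucc) (f i.succ)) → P (f 0) (f (Fin.last n)) := by
  induction n with
  | zero => exact fun f hi _ => P.refl _ (hi _)
  | succ n ih =>
    intro f hi hs
    have h := ih (fun i => f i.castSucc) (fun i => hi _) (fun i => by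
      have := hs i.castSucc
      rwa [Fin.succ_castSucc] at this)
    simp only [Fin.castSucc_zero] at h
    exact h.snoc (by simpa only [Fin.succ_last] using hs (Fin.last n)) (hi _)

theorem P.of_hasPath {X Y : C} (h : HasPath C X Y) : P X Y := by
  obtain ⟨n, f, h0, hl, hind, hstep⟩ := h
  subst h0 hl
  exact P.of_seq n f hind hstep

theorem P.hasPath {X Y : C} (h : P X Y) : HasPath C X Y := by
  induction h with
  | refl hX =>
    rename_i X
    exact ⟨0, fun _ => X, rfl, rfl, fun _ => hX, fun i => i.elim0⟩
  | @snoc Y Z _ st hZ ih =>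
    obtain ⟨n, f, h0, hl, hind, hstep⟩ := ih
    refine ⟨n + 1, Fin.snoc f Z, ?_, ?_, ?_, ?_⟩
    · rw [show (0 : Fin (n + 2)) = Fin.castSucc 0 from (Fin.castSucc_zero).symm,
        Fin.snoc_castSucc]
      exact h0
    · rw [Fin.snoc_last]
    · intro i
      refine Fin.lastCases ?_ ?_ i
      · rw [Fin.snoc_last]; exact hZ
      · intro j; rw [Fin.snoc_castSucc]; exact hind j
    · intro i
      refine Fin.lastCases ?_ ?_ i
      · rw [show (Fin.last n).castSucc = Fin.castSucc (Fin.last n) from rfl,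
          Fin.snoc_castSucc, Fin.succ_last, Fin.snoc_last, hl]
        exact st
      · intro j
        rw [show (Fin.castSucc j).castSucc = Fin.castSucc j.castSucc from rfl,
          Fin.snoc_castSucc, Fin.succ_castSucc, Fin.snoc_castSucc]
        exact hstep j

theorem biprod_fst_inl {A K : C} (hK : IsZero K) :
    (biprod.fst : A ⊞ K ⟶ A) ≫ biprod.inl = 𝟙 (A ⊞ K) := by
  apply biprod.hom_ext
  · simp
  · exact hK.eq_of_tgt _ _

/-- A split mono exhibits its source as a direct summand of its target. -/
theorem summand {A B : C} (t : A ⟶ B) (r : B ⟶ A) (htr : t ≫ r = 𝟙 A) :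
    ∃ (K : C) (e : B ≅ A ⊞ K), t ≫ e.hom = biprod.inl := by
  obtain ⟨K, q, w, hT⟩ := Pretriangulated.distinguished_cocone_triangle t
  have htq : t ≫ q = 0 := comp_distTriang_mor_zero₁₂ _ hT
  have hw : w = 0 := by
    have h1 : w ≫ (shiftFunctor C (1 : ℤ)).map t = 0 := comp_distTriang_mor_zero₃₁ _ hT
    calc w = w ≫ (shiftFunctor C (1 : ℤ)).map (t ≫ r) := by
          rw [htr, (shiftFunctor C (1 : ℤ)).map_id, Category.comp_id]
    _ = (w ≫ (shiftFunctor C (1 : ℤ)).map t) ≫ (shiftFunctor C (1 : ℤ)).map r := by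
          rw [(shiftFunctor C (1 : ℤ)).map_comp, Category.assoc]
    _ = 0 := by rw [h1, zero_comp]
  let φ : Triangle.mk t q w ⟶ binaryBiproductTriangle A K :=
    { hom₁ := 𝟙 A
      hom₂ := biprod.lift r q
      hom₃ := 𝟙 K
      comm₁ := by
        show t ≫ biprod.lift r q = 𝟙 A ≫ biprod.inl
        apply biprod.hom_ext
        · simp [htr]
        · simp [htq]
      comm₂ := by show q ≫ 𝟙 K = biprod.lift r q ≫ biprod.snd; simp
      comm₃ := by show w ≫ (shiftFunctor C 1).map (𝟙 A) = 𝟙 K ≫ 0; simp [hw] }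
  haveI : IsIso (biprod.lift r q : B ⟶ A ⊞ K) :=
    isIso₂_of_isIso₁₃ φ hT (binaryBiproductTriangle_distinguished A K)
      (by dsimp [φ]; exact IsIso.id A) (by dsimp [φ]; exact IsIso.id K)
  refine ⟨K, asIso (biprod.lift r q), ?_⟩
  apply biprod.hom_ext
  · simp [htr]
  · simp [htq]

/-- Key lemma: a nonzero map between indecomposables yields a path `Y ⇝ X⟦1⟧`. -/
theorem key {X Y : C} (hdec : EveryObjectDecomposes C) (hX : Indec C X) (hY : Indec C Y)
    (f : X ⟶ Y) (hf : f ≠ 0) : P Y (X⟦(1 : ℤ)⟧) := by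
  classical
  obtain ⟨Z, g, h, hT⟩ := Pretriangulated.distinguished_cocone_triangle f
  obtain ⟨n, Zf, hZf, ⟨e⟩⟩ := hdec Z
  have hT' : Triangle.mk f (g ≫ e.hom) (e.inv ≫ h) ∈ distTriang C := by
    refine isomorphic_distinguished _ hT _ ?_
    refine Triangle.isoMk _ _ (Iso.refl _) (Iso.refl _) e.symm ?_ ?_ ?_
    · show f ≫ 𝟙 Y = 𝟙 X ≫ f; simp
    · show (g ≫ e.hom) ≫ e.inv = 𝟙 Y ≫ g; simp
    · show (e.inv ≫ h) ≫ (shiftFunctor C 1).map (𝟙 X) = e.inv ≫ h; simp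
  set g' : Y ⟶ ⨁ Zf := g ≫ e.hom with hg'
  set h' : (⨁ Zf) ⟶ X⟦(1 : ℤ)⟧ := e.inv ≫ h with hh'
  by_cases hcase : ∃ i, g' ≫ biproduct.π Zf i ≠ 0 ∧ biproduct.ι Zf i ≫ h' ≠ 0
  · obtain ⟨i, h1, h2⟩ := hcase
    exact ((P.refl Y hY).snoc (Or.inl ⟨_, h1⟩) (hZf i)).snoc (Or.inl ⟨_, h2⟩)
      (indec_shift hX 1)
  · push_neg at hcase
    set p : Fin n → Prop := fun i => biproduct.ι Zf i ≫ h' = 0 with hp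
    have hfs : biproduct.fromSubtype Zf p ≫ h' = 0 := by
      apply biproduct.hom_ext'
      intro j
      rw [comp_zero, ← Category.assoc, biproduct.ι_fromSubtype]
      exact j.2
    have hgp : g' ≫ (biproduct.toSubtype Zf p ≫ biproduct.fromSubtype Zf p) = g' := by
      apply biproduct.hom_ext
      intro j
      by_cases hj : p j
      · have hif : (if p j then 𝟙 (Zf j) else 0) = 𝟙 (Zf j) := if_pos hj
        simp [biproduct.toSubtype_fromSubtype, biproduct.map_π, hif]
      · have h0 : g' ≫ biproduct.π Zf j = 0 := by
          by_contra hne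
          exact hj (hcase j hne)
        simp [biproduct.toSubtype_fromSubtype, biproduct.map_π, hj, h0]
    obtain ⟨t, ht⟩ := Triangle.coyoneda_exact₃ _ hT' (biproduct.fromSubtype Zf p) hfs
    have ht' : biproduct.fromSubtype Zf p = t ≫ g' := ht
    have hsplit : (t : (⨁ Subtype.restrict p Zf) ⟶ Y) ≫ (g' ≫ biproduct.toSubtype Zf p) = 𝟙 _ := by
      exact (Category.assoc _ _ _).symm.trans ((congrArg (· ≫ biproduct.toSubtype Zf p) ht').symm.trans
        (biproduct.fromSubtype_toSubtype Zf p))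
    obtain ⟨K, eY, heY⟩ := summand (t : (⨁ Subtype.restrict p Zf) ⟶ Y)
      (g' ≫ biproduct.toSubtype Zf p) hsplit
    rcases hY.2 _ _ eY with hz | hz
    · have hfs0 : biproduct.fromSubtype Zf p = 0 := hz.eq_of_src _ _
      have hg0 : g' = 0 := by
        rw [← hgp, hfs0, comp_zero, comp_zero]
      obtain ⟨u, hu⟩ := Triangle.coyoneda_exact₂ _ hT' (𝟙 Y)
        (by exact (Category.id_comp _).trans hg0)
      let u' : Y ⟶ X := u
      have hu' : u' ≫ f = 𝟙 Y := hu.symm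
      obtain ⟨K2, eX, _⟩ := summand u' f hu'

      rcases hX.2 _ _ eX with hz2 | hz2
      · exact absurd hz2 hY.1
      · have eYX : Y ≅ X := by
          refine ⟨biprod.inl ≫ eX.inv, eX.hom ≫ biprod.fst, ?_, ?_⟩
          · rw [Category.assoc, eX.inv_hom_id_assoc, biprod.inl_fst]
          · rw [Category.assoc, ← Category.assoc biprod.fst, biprod_fst_inl hz2,
              Category.id_comp, eX.hom_inv_id]
        exact ((P.refl Y hY).snoc (step_of_iso eYX hY) hX).snoc
          (Or.inr ⟨Iso.refl _⟩) (indec_shift hX 1)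
    · haveI hinl : IsIso (biprod.inl :
          (⨁ Subtype.restrict p Zf) ⟶ (⨁ Subtype.restrict p Zf) ⊞ K) :=
        ⟨biprod.fst, by simp, biprod_fst_inl hz⟩
      haveI hti : IsIso t := by
        have : t = biprod.inl ≫ eY.inv := by
          rw [← heY, Category.assoc, eY.hom_inv_id, Category.comp_id]
        rw [this]; infer_instance
      have hrt : (g' ≫ biproduct.toSubtype Zf p) ≫ t = 𝟙 Y := by
        exact (congrArg (· ≫ t) (IsIso.eq_inv_of_hom_inv_id hsplit)).trans (IsIso.inv_hom_id t)
      have hf0 : f = 0 := by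
        have h12 : f ≫ g' = 0 := comp_distTriang_mor_zero₁₂ _ hT'
        calc f = (f ≫ ((g' ≫ biproduct.toSubtype Zf p) ≫ t) : X ⟶ Y) := by
              exact ((congrArg (f ≫ ·) hrt).trans (Category.comp_id f)).symm
        _ = (((f ≫ g') ≫ biproduct.toSubtype Zf p) ≫ t : X ⟶ Y) := by
              exact (Category.assoc _ _ _).symm.trans (congrArg (· ≫ t) (Category.assoc _ _ _).symm)
        _ = 0 := by rw [h12, zero_comp]; exact zero_comp
      exact absurd hf0 hf

/-- Propagation of the cyclicity property along one step of connectivity. -/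
theorem propagate {A B : C} (hdec : EveryObjectDecomposes C) (hA : Indec C A) (hB : Indec C B)
    (hstep : (∃ g : A ⟶ B, g ≠ 0) ∨ (∃ g : B ⟶ A, g ≠ 0) ∨ ∃ s : ℤ, Nonempty (B ≅ A⟦s⟧))
    (hΦ : P (B⟦(1 : ℤ)⟧) B) : P (A⟦(1 : ℤ)⟧) A := by
  rcases hstep with ⟨g, hg⟩ | ⟨g, hg⟩ | ⟨s, ⟨e⟩⟩
  · have P1 : P (A⟦(1 : ℤ)⟧) (B⟦(1 : ℤ)⟧) :=
      P.single (indec_shift hA 1) (indec_shift hB 1)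
        (Or.inl ⟨(shiftFunctor C (1 : ℤ)).map g, shift_map_ne_zero hg 1⟩)
    have P3 : P B (B⟦(-1 : ℤ)⟧) :=
      (P.single hB (indec_shift (indec_shift hB 1) (-1))
        (step_of_iso (((shiftFunctorCompIsoId C (1 : ℤ) (-1) (by ring)).app B).symm) hB)).trans
        (hΦ.shift (-1))
    have P4 : P (B⟦(-1 : ℤ)⟧) A :=
      ((key hdec hA hB g hg).shift (-1)).snoc
        (step_of_iso ((shiftFunctorCompIsoId C (1 : ℤ) (-1) (by ring)).app A)
          (indec_shift (indec_shift hA 1) (-1))) hA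
    exact ((P1.trans hΦ).trans P3).trans P4
  · have P1 : P (A⟦(1 : ℤ)⟧) (B⟦(1 : ℤ)⟧⟦(1 : ℤ)⟧) := (key hdec hB hA g hg).shift 1
    exact ((P1.trans (hΦ.shift 1)).trans hΦ).snoc (Or.inl ⟨g, hg⟩) hA
  · have i1 : A⟦(1 : ℤ)⟧ ≅ B⟦(1 : ℤ)⟧⟦-s⟧ := by
      have j1 : B⟦(1 : ℤ)⟧ ≅ A⟦(1 : ℤ)⟧⟦s⟧ :=
        (shiftFunctor C (1 : ℤ)).mapIso e ≪≫ shiftComm A s 1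
      exact ((shiftFunctorCompIsoId C s (-s) (by ring)).app (A⟦(1 : ℤ)⟧)).symm ≪≫
        ((shiftFunctor C (-s)).mapIso j1).symm
    have i2 : B⟦-s⟧ ≅ A :=
      (shiftFunctor C (-s)).mapIso e ≪≫ (shiftFunctorCompIsoId C s (-s) (by ring)).app A
    exact ((P.single (indec_shift hA 1) (indec_shift (indec_shift hB 1) (-s))
      (step_of_iso i1 (indec_shift hA 1))).trans (hΦ.shift (-s))).snoc
      (step_of_iso i2 (indec_shift hB (-s))) hA

theorem conn_propagate (hdec : EveryObjectDecomposes C) (n : ℕ) :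
    ∀ (f : Fin (n + 1) → C), (∀ i, Indec C (f i)) →
    (∀ i : Fin n, (∃ g : f i.castSucc ⟶ f i.succ, g ≠ 0) ∨
      (∃ g : f i.succ ⟶ f i.castSucc, g ≠ 0) ∨
      ∃ s : ℤ, Nonempty (f i.succ ≅ (f i.castSucc)⟦s⟧)) →
    P ((f (Fin.last n))⟦(1 : ℤ)⟧) (f (Fin.last n)) → P ((f 0)⟦(1 : ℤ)⟧) (f 0) := by
  induction n with
  | zero =>
    intro f _ _ hΦ
    rwa [show (Fin.last 0) = (0 : Fin 1) from by decide] at hΦ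
  | succ n ih =>
    intro f hi hs hΦ
    have tail := ih (fun i => f i.succ) (fun i => hi _) (fun i => by
        have := hs i.succ
        rwa [← Fin.succ_castSucc] at this) (by
        rwa [show Fin.last (n + 1) = (Fin.last n).succ from (Fin.succ_last n).symm] at hΦ)
    have h0 := hs 0
    rw [Fin.castSucc_zero] at h0
    exact propagate hdec (hi 0) (hi _) h0 tail

end Stmt17Aux

/-- in a block, if one indecomposable `X` admits no path from `X⟦1⟧` to `X`,
then the same holds for every indecomposable. -/
theorem stmt_17 (hblock : IsBlock C) (X : C) (hX : Indec C X)
    (h : ¬ HasPath C (X⟦(1 : ℤ)⟧) X) :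
    ∀ Y : C, Indec C Y → ¬ HasPath C (Y⟦(1 : ℤ)⟧) Y := by
  intro Y hY hpathY
  apply h
  obtain ⟨n, f, h0, hl, hind, hsteps⟩ := hblock.2.2 X Y hX hY
  have hend : P ((f (Fin.last n))⟦(1 : ℤ)⟧) (f (Fin.last n)) := by
    rw [hl]; exact P.of_hasPath hpathY
  have hstart := conn_propagate hblock.2.1 n f hind hsteps hend
  rw [h0] at hstart
  exact hstart.hasPath
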